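/- Let m, n be nonnegative integers with v_m = w_n, and let d ∈ ℤ[i][X] satisfy c*d + 4 = (v_m)^2. If d = d₋, i.e. if 2*d = 2*(a+b+c) + a*b*c + r*s*t or 2*d = 2*(a+b+c) + a*b*c − r*s*t, and deg(d) < γ, then m ≤ 1 and n ≤ 1. -/

import Mathlib

/-!
Since `c * d + 4 = v m ^ 2`, the bound `deg d < deg c` forces
`2 deg (v m) ≤ deg c + deg d < 2 deg c`. On the other hand
`v 2 = (c (a z₀ + s x₀) + 2 z₀) / 2` with `a z₀ + s x₀ ≠ 0`, so `deg (v 2) ≥ deg c`,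
and from there on the recurrence `v (k + 2) = s v (k + 1) - v k` raises the degree by
`deg s > 0` at every step. Hence `m ≤ 1`, and symmetrically `n ≤ 1`.
-/

open Polynomial

namespace Polynomial

variable {R : Type*} [CommRing R] [IsDomain R]

lemma natDegree_lt_of_mul_add_four_eq_sq {c d v : R[X]} (h : c * d + 4 = v ^ 2)
    (hd : d.natDegree < c.natDegree) : v.natDegree < c.natDegree := by
  have hsq : 2 * v.natDegree ≤ c.natDegree + d.natDegree := by
    rw [← natDegree_pow, ← h]
    exact (natDegree_add_le _ _).trans (max_le natDegree_mul_le (by simp))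
  omega

lemma two_mul_natDegree_of_add_four_eq_sq {p s : R[X]} (hp : 0 < p.natDegree)
    (h : p + 4 = s ^ 2) : 2 * s.natDegree = p.natDegree := by
  rw [← natDegree_pow, ← h, natDegree_add_eq_left_of_natDegree_lt (by simpa using hp)]

lemma natDegree_succ_of_recurrence {s : R[X]} {u : ℕ → R[X]} (hs : 0 < s.natDegree)
    (hrec : ∀ k, u (k + 2) = s * u (k + 1) - u k)
    (h0 : (u 0).natDegree < s.natDegree + (u 1).natDegree) (h1 : u 1 ≠ 0) (k : ℕ) :
    (u (k + 1)).natDegree = (u 1).natDegree + k * s.natDegree := by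
  have step : ∀ k, u (k + 1) ≠ 0 → (u k).natDegree < s.natDegree + (u (k + 1)).natDegree →
      (u (k + 2)).natDegree = s.natDegree + (u (k + 1)).natDegree := fun k hne hlt => by
    rw [← natDegree_mul (ne_zero_of_natDegree_gt hs) hne] at hlt ⊢
    rw [hrec, natDegree_sub_eq_left_of_natDegree_lt hlt]
  have inv : ∀ k, u (k + 1) ≠ 0 ∧ (u k).natDegree < s.natDegree + (u (k + 1)).natDegree := by
    intro k
    induction k with
    | zero => exact ⟨h1, h0⟩
    | succ k ih =>
      have := step k ih.1 ih.2
      show u (k + 2) ≠ 0 ∧ (u (k + 1)).natDegree < s.natDegree + (u (k + 2)).natDegree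
      exact ⟨ne_zero_of_natDegree_gt (n := 0) (by omega), by omega⟩
  induction k with
  | zero => simp
  | succ k ih => rw [step k (inv k).1 (inv k).2, ih]; ring

variable [CharZero R]

lemma natDegree_two_mul (p : R[X]) : (2 * p).natDegree = p.natDegree := by
  rw [← C_ofNat, natDegree_C_mul two_ne_zero]

lemma natDegree_eq_zero_of_mul_eq_neg_four {p q : R[X]} (h : p * q = -4) :
    p.natDegree = 0 := by
  have hpq : p * q ≠ 0 := by rw [h]; norm_num
  have := natDegree_mul (left_ne_zero_of_mul hpq) (right_ne_zero_of_mul hpq)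
  rw [h, natDegree_neg, natDegree_ofNat] at this
  omega

lemma mul_add_mul_ne_zero_of_pell {a c s z x d : R[X]} (hac : a ≠ c) (hc : 0 < c.natDegree)
    (hs : a * c + 4 = s ^ 2) (hz : a * z ^ 2 - c * x ^ 2 = 4 * (a - c))
    (hd : a * d + 4 = x ^ 2) (hx : 4 * x.natDegree ≤ a.natDegree + c.natDegree) :
    a * z + s * x ≠ 0 := by
  -- Squaring `a z = -s x` turns the Pell equation into `x² = a (a - c)`, which makes `a` a
  -- divisor of `-4`; then `deg x` is too large.
  intro h
  have hx2 : x ^ 2 = a * (a - c) := mul_left_cancel₀ (by norm_num : (4 : R[X]) ≠ 0) <| by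
    linear_combination a * hz - (a * z - s * x) * h + x ^ 2 * hs
  have hunit : a * (d - a + c) = -4 := by linear_combination hd + hx2
  have ha : a ≠ 0 := left_ne_zero_of_mul (by rw [hunit]; norm_num)
  have ha0 : a.natDegree = 0 := natDegree_eq_zero_of_mul_eq_neg_four hunit
  have : 2 * x.natDegree = c.natDegree := by
    rw [← natDegree_pow, hx2, natDegree_mul ha (sub_ne_zero.mpr hac),
      natDegree_sub_eq_right_of_natDegree_lt (by omega)]
    omega
  omega

lemma natDegree_le_of_pell_recurrence {a c s z x d : R[X]} {v : ℕ → R[X]} (ha : a ≠ 0)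
    (hac : a ≠ c) (hc : 0 < c.natDegree) (hs : a * c + 4 = s ^ 2)
    (hz : a * z ^ 2 - c * x ^ 2 = 4 * (a - c))
    (hzdeg : 4 * z.natDegree + a.natDegree ≤ 3 * c.natDegree)
    (hxdeg : 4 * x.natDegree ≤ a.natDegree + c.natDegree) (hd : a * d + 4 = x ^ 2)
    (hv0 : v 0 = z) (hv1 : 2 * v 1 = s * z + c * x)
    (hvrec : ∀ k, v (k + 2) = s * v (k + 1) - v k)
    {m : ℕ} (hm : 2 ≤ m) : c.natDegree ≤ (v m).natDegree := by
  have hc0 : c ≠ 0 := ne_zero_of_natDegree_gt hc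
  have hsdeg : 2 * s.natDegree = a.natDegree + c.natDegree := by
    rw [two_mul_natDegree_of_add_four_eq_sq (by rw [natDegree_mul ha hc0]; omega) hs,
      natDegree_mul ha hc0]
  have hu := mul_add_mul_ne_zero_of_pell hac hc hs hz hd hxdeg
  have hv2 : 2 * v 2 = c * (a * z + s * x) + 2 * z := by
    linear_combination 2 * hvrec 0 + s * hv1 - 2 * hv0 - z * hs
  have hv2deg : (v 2).natDegree = c.natDegree + (a * z + s * x).natDegree := by
    rw [← natDegree_two_mul, hv2, natDegree_add_eq_left_of_natDegree_lt, natDegree_mul hc0 hu]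
    rw [natDegree_mul hc0 hu, natDegree_two_mul]
    omega
  have hv1deg : 4 * (v 1).natDegree ≤ a.natDegree + 5 * c.natDegree := by
    have := (natDegree_add_le (s * z) (c * x)).trans
      (max_le_max (natDegree_mul_le (p := s)) (natDegree_mul_le (p := c)))
    rw [← hv1, natDegree_two_mul] at this
    omega
  obtain ⟨k, rfl⟩ : ∃ k, m = k + 2 := ⟨m - 2, by omega⟩
  have growth : (v (k + 2)).natDegree = (v 2).natDegree + k * s.natDegree :=
    natDegree_succ_of_recurrence (u := fun k => v (k + 1)) (by omega) (fun k => hvrec (k + 1))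
      (show (v 1).natDegree < s.natDegree + (v 2).natDegree by omega)
      (show v 2 ≠ 0 from ne_zero_of_natDegree_gt (n := 0) (by omega)) k
  omega

end Polynomial

theorem d_minus_forces_small_indices_general
    (a b c s t : GaussianInt[X])
    (ha : a ≠ 0) (hb : b ≠ 0)
    (hac : a ≠ c) (hbc : b ≠ c)
    (hs : a * c + 4 = s ^ 2) (ht : b * c + 4 = t ^ 2)
    (hγ : 0 < c.natDegree)
    (z0 x0 d0 : GaussianInt[X]) (v : ℕ → GaussianInt[X])
    (hz0 : a * z0 ^ 2 - c * x0 ^ 2 = 4 * (a - c))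
    (hz0deg : 4 * z0.natDegree + a.natDegree ≤ 3 * c.natDegree)
    (hx0deg : 4 * x0.natDegree ≤ a.natDegree + c.natDegree)
    (hd0a : a * d0 + 4 = x0 ^ 2)
    (hv0 : v 0 = z0) (hv1 : 2 * v 1 = s * z0 + c * x0)
    (hvrec : ∀ k, v (k + 2) = s * v (k + 1) - v k)
    (z1 y1 d1 : GaussianInt[X]) (w : ℕ → GaussianInt[X])
    (hz1 : b * z1 ^ 2 - c * y1 ^ 2 = 4 * (b - c))
    (hz1deg : 4 * z1.natDegree + b.natDegree ≤ 3 * c.natDegree)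
    (hy1deg : 4 * y1.natDegree ≤ b.natDegree + c.natDegree)
    (hd1b : b * d1 + 4 = y1 ^ 2)
    (hw0 : w 0 = z1) (hw1 : 2 * w 1 = t * z1 + c * y1)
    (hwrec : ∀ k, w (k + 2) = t * w (k + 1) - w k)
    (m n : ℕ) (heq : v m = w n)
    (d : GaussianInt[X]) (hd : c * d + 4 = (v m) ^ 2)
    (hddeg : d.natDegree < c.natDegree) :
    m ≤ 1 ∧ n ≤ 1 := by
  have hvm := natDegree_lt_of_mul_add_four_eq_sq hd hddeg
  constructor
  · by_contra! hm
    exact (natDegree_le_of_pell_recurrence ha hac hγ hs hz0 hz0deg hx0deg hd0a hv0 hv1 hvrec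
      hm).not_gt hvm
  · by_contra! hn
    exact (natDegree_le_of_pell_recurrence hb hbc hγ ht hz1 hz1deg hy1deg hd1b hw0 hw1 hwrec
      hn).not_gt (heq ▸ hvm)

/-- If the extension d coming from v_m = w_n equals d₋, then m, n ∈ {0, 1}. -/
theorem d_minus_forces_small_indices
    (a b c r s t : GaussianInt[X])
    (ha : a ≠ 0) (hb : b ≠ 0) (hc : c ≠ 0)
    (hab : a ≠ b) (hac : a ≠ c) (hbc : b ≠ c)
    (hr : a * b + 4 = r ^ 2) (hs : a * c + 4 = s ^ 2) (ht : b * c + 4 = t ^ 2)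
    (hαβ : a.natDegree ≤ b.natDegree) (hβγ : b.natDegree ≤ c.natDegree)
    (hβ : 0 < b.natDegree) (hγ : 0 < c.natDegree)
    (z0 x0 d0 : GaussianInt[X]) (v : ℕ → GaussianInt[X])
    (hz0 : a * z0 ^ 2 - c * x0 ^ 2 = 4 * (a - c))
    (hz0deg : 4 * z0.natDegree + a.natDegree ≤ 3 * c.natDegree)
    (hx0deg : 4 * x0.natDegree ≤ a.natDegree + c.natDegree)
    (hd0c : c * d0 + 4 = z0 ^ 2) (hd0a : a * d0 + 4 = x0 ^ 2)
    (hv0 : v 0 = z0) (hv1 : 2 * v 1 = s * z0 + c * x0)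
    (hvrec : ∀ k, v (k + 2) = s * v (k + 1) - v k)
    (z1 y1 d1 : GaussianInt[X]) (w : ℕ → GaussianInt[X])
    (hz1 : b * z1 ^ 2 - c * y1 ^ 2 = 4 * (b - c))
    (hz1deg : 4 * z1.natDegree + b.natDegree ≤ 3 * c.natDegree)
    (hy1deg : 4 * y1.natDegree ≤ b.natDegree + c.natDegree)
    (hd1c : c * d1 + 4 = z1 ^ 2) (hd1b : b * d1 + 4 = y1 ^ 2)
    (hw0 : w 0 = z1) (hw1 : 2 * w 1 = t * z1 + c * y1)
    (hwrec : ∀ k, w (k + 2) = t * w (k + 1) - w k)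
    (m n : ℕ) (heq : v m = w n)
    (d : GaussianInt[X]) (hd : c * d + 4 = (v m) ^ 2)
    (hdmin : 2 * d = 2 * (a + b + c) + a * b * c + r * s * t ∨
             2 * d = 2 * (a + b + c) + a * b * c - r * s * t)
    (hddeg : d.natDegree < c.natDegree) :
    m ≤ 1 ∧ n ≤ 1 :=
  d_minus_forces_small_indices_general a b c s t ha hb hac hbc hs ht hγ z0 x0 d0 v hz0 hz0deg hx0deg
    hd0a hv0 hv1 hvrec z1 y1 d1 w hz1 hz1deg hy1deg hd1b hw0 hw1 hwrec m n heq d hd hddeg
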